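/- arXiv:2510.13882 — 7 statements merged into one kernel-verified Lean document; each statement's English description precedes it below -/
import Mathlib

section
/- Let k ≥ 1 and s ≥ 1 be integers, let f_1, …, f_s be monic pairwise coprime polynomials in (ZMod (2^k))[X] with M = ∏_{i=1}^s f_i, let M_i = ∏_{j ≠ i} f_j, let u_i satisfy M_i · u_i ≡ 1 (mod f_i), and let e_i be the image of M_i · u_i in R := (ZMod (2^k))[X]/(M). For any subset I ⊆ {1, …, s}, set e = ∑_{i ∈ I} e_i and h = ∏_{j ∉ I} f_j. Then the principal ideal of R generated by e equals the principal ideal of R generated by the image of h: Ideal.span {e} = Ideal.span {h mod M}. -/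
/-! Write `e = ∑_{i ∈ I} M_i u_i`, `g = ∏_{i ∈ I} f_i` and `h = ∏_{j ∉ I} f_j`, so that
`M = g h`. Every `M_i` with `i ∈ I` contains all the `f_j` with `j ∉ I`, so `h ∣ e`. Modulo
`f_i` with `i ∈ I` only the summand `M_i u_i ≡ 1` survives, so `f_i ∣ e - 1`, and by
coprimality `g ∣ e - 1`. Then `(e - 1) h ≡ 0 (mod M)`, i.e. `h ≡ e h`, so `e` and `h` divide
each other modulo `M`. -/

open Polynomial

namespace Ideal

theorem span_singleton_mk_eq_of_dvd_of_dvd_sub_one {R : Type*} [CommRing R] {g h e : R}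
    (hh : h ∣ e) (hg : g ∣ e - 1) :
    span {Quotient.mk (span {g * h}) e} = span {Quotient.mk (span {g * h}) h} := by
  apply le_antisymm <;> rw [span_singleton_le_span_singleton]
  · exact map_dvd _ hh
  · refine ⟨Quotient.mk _ h, ?_⟩
    rw [← map_mul, Quotient.eq, mem_span_singleton, show h - e * h = -((e - 1) * h) by ring]
    exact (mul_dvd_mul_right hg h).neg_right

end Ideal

section Idempotents

open Function

variable {R ι : Type*} [CommRing R] [Fintype ι] [DecidableEq ι] (f u : ι → R) (I : Finset ι)

theorem prod_compl_dvd_sum_prod_erase_mul :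
    (∏ j ∈ Iᶜ, f j) ∣ ∑ i ∈ I, (∏ j ∈ Finset.univ.erase i, f j) * u i := by
  refine Finset.dvd_sum fun i hi => Dvd.dvd.mul_right (Finset.prod_dvd_prod_of_subset _ _ _ ?_) _
  intro j hj
  exact Finset.mem_erase.2 ⟨fun hji => Finset.mem_compl.1 hj (hji ▸ hi), Finset.mem_univ j⟩

theorem prod_dvd_sum_prod_erase_mul_sub_one (hcop : (I : Set ι).Pairwise (IsCoprime on f))
    (hu : ∀ i ∈ I, f i ∣ (∏ j ∈ Finset.univ.erase i, f j) * u i - 1) :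
    (∏ i ∈ I, f i) ∣ (∑ i ∈ I, (∏ j ∈ Finset.univ.erase i, f j) * u i) - 1 := by
  refine Finset.prod_dvd_of_coprime hcop fun i hi => ?_
  rw [← Finset.add_sum_erase _ _ hi, add_sub_right_comm]
  refine dvd_add (hu i hi) (Finset.dvd_sum fun j hj => Dvd.dvd.mul_right ?_ _)
  exact Finset.dvd_prod_of_mem _
    (Finset.mem_erase.2 ⟨(Finset.ne_of_mem_erase hj).symm, Finset.mem_univ i⟩)

end Idempotents

theorem stmt_1_general (k s : ℕ)
    (f : Fin s → Polynomial (ZMod (2 ^ k)))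
    (hcop : ∀ i j, i ≠ j → IsCoprime (f i) (f j))
    (u : Fin s → Polynomial (ZMod (2 ^ k)))
    (hu : ∀ i, f i ∣ ((∏ j ∈ Finset.univ.erase i, f j) * u i - 1))
    (I : Finset (Fin s)) :
    Ideal.span {∑ i ∈ I, Ideal.Quotient.mk (Ideal.span {∏ i, f i})
        ((∏ j ∈ Finset.univ.erase i, f j) * u i)}
      = Ideal.span {Ideal.Quotient.mk (Ideal.span {∏ i, f i}) (∏ j ∈ Iᶜ, f j)} := by
  rw [← map_sum, ← Finset.prod_mul_prod_compl I f]
  exact Ideal.span_singleton_mk_eq_of_dvd_of_dvd_sub_one (prod_compl_dvd_sum_prod_erase_mul f u I)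
    (prod_dvd_sum_prod_erase_mul_sub_one f u I (fun i _ j _ hij => hcop i j hij) fun i _ => hu i)

theorem stmt_1 (k s : ℕ) (hk : 1 ≤ k) (hs : 1 ≤ s)
    (f : Fin s → Polynomial (ZMod (2 ^ k)))
    (hf : ∀ i, (f i).Monic)
    (hcop : ∀ i j, i ≠ j → IsCoprime (f i) (f j))
    (u : Fin s → Polynomial (ZMod (2 ^ k)))
    (hu : ∀ i, f i ∣ ((∏ j ∈ Finset.univ.erase i, f j) * u i - 1))
    (I : Finset (Fin s)) :
    Ideal.span {∑ i ∈ I, Ideal.Quotient.mk (Ideal.span {∏ i, f i})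
        ((∏ j ∈ Finset.univ.erase i, f j) * u i)}
      = Ideal.span {Ideal.Quotient.mk (Ideal.span {∏ i, f i}) (∏ j ∈ Iᶜ, f j)} :=
  stmt_1_general k s f hcop u hu I
end

section
/- Let k ≥ 1, N ≥ 1 and δ ≥ 1 be integers. Suppose X^N + 1 = g · h in (ZMod (2^k))[X] with g, h monic and IsCoprime g h. Let ḡ ∈ (ZMod 2)[X] be the image of g under coefficientwise reduction modulo 2. Assume that every nonzero element of the ideal generated by the image of ḡ in (ZMod 2)[X]/(X^N + 1) has Hamming weight at least δ. Then every nonzero element of the ideal generated by the image of g in (ZMod (2^k))[X]/(X^N + 1) has Hamming weight at least δ. -/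
/-!
Since `g ∣ X ^ N + 1`, membership in the ideal generated by `g` in the quotient is plain
divisibility by `g`. Write a nonzero multiple `p` of `g` as `2 ^ j * q` with `j < k` maximal, so
that `q` does not vanish mod 2. The remainder `r` of `q` modulo the monic `g` satisfies
`g ∣ 2 ^ j * r` with `deg (2 ^ j * r) < deg g`, so `2 ^ j * r = 0`, which forces `r ≡ 0 mod 2`
and hence `ḡ ∣ q̄`. Thus `q̄` is a nonzero binary codeword, and its support lies in that of `p`:
a coefficient of `q` that is odd stays nonzero after multiplication by `2 ^ j`, as `j < k`.
-/

open Polynomial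

theorem Ideal.dvd_of_mk_mem_span_mk {R : Type*} [CommRing R] {m g f : R} (hgm : g ∣ m)
    (hf : Ideal.Quotient.mk (Ideal.span {m}) f ∈
      Ideal.span {Ideal.Quotient.mk (Ideal.span {m}) g}) : g ∣ f := by
  rwa [← Set.image_singleton, ← Ideal.map_span, Ideal.mem_quotient_iff_mem
    (Ideal.span_singleton_le_span_singleton.mpr hgm), Ideal.mem_span_singleton] at hf

theorem Polynomial.Monic.map_dvd_map_of_dvd_C_mul {R S : Type*} [CommRing R] [CommRing S]
    {g q : R[X]} (hg : g.Monic) {c : R} (φ : R →+* S) (hc : ∀ a, c * a = 0 → φ a = 0)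
    (hdvd : g ∣ C c * q) : g.map φ ∣ q.map φ := by
  cases subsingleton_or_nontrivial R
  · simp [Subsingleton.elim q 0]
  have hr : C c * (q %ₘ g) = 0 := by
    by_contra hne
    refine hg.not_dvd_of_degree_lt hne ((smul_eq_C_mul c ▸ degree_smul_le c _).trans_lt
      (degree_modByMonic_lt q hg)) ?_
    rw [modByMonic_eq_sub_mul_div, mul_sub, mul_left_comm]
    exact dvd_sub hdvd (dvd_mul_right _ _)
  rw [← modByMonic_eq_zero_iff_dvd (hg.map φ), ← map_modByMonic φ hg]
  ext i
  simpa using hc _ (by simpa using congrArg (coeff · i) hr)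

namespace ZMod

variable {n k : ℕ} [NeZero n] (φ : ZMod (n ^ k) →+* ZMod n)

theorem ringHom_apply_eq_natCast_val (a : ZMod (n ^ k)) : φ a = a.val := by
  rw [← map_natCast φ, natCast_zmod_val]

theorem natCast_dvd_of_ringHom_eq_zero {a : ZMod (n ^ k)} (h : φ a = 0) :
    (n : ZMod (n ^ k)) ∣ a := by
  rw [ringHom_apply_eq_natCast_val, natCast_eq_zero_iff] at h
  obtain ⟨m, hm⟩ := h
  exact ⟨m, by rw [← natCast_zmod_val a, hm, Nat.cast_mul]⟩

theorem ringHom_eq_zero_of_pow_mul_eq_zero {j : ℕ} (hj : j < k) {a : ZMod (n ^ k)}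
    (h : (n : ZMod (n ^ k)) ^ j * a = 0) : φ a = 0 := by
  rw [← natCast_zmod_val a, ← Nat.cast_pow, ← Nat.cast_mul, natCast_eq_zero_iff] at h
  have hk : n ^ j * n ^ (k - j) ∣ n ^ j * a.val := by rwa [← pow_add, Nat.add_sub_cancel' hj.le]
  have hval : n ∣ a.val := (dvd_pow_self n (Nat.sub_ne_zero_of_lt hj)).trans
    (Nat.dvd_of_mul_dvd_mul_left (pow_pos (NeZero.pos n) j) hk)
  rwa [ringHom_apply_eq_natCast_val, natCast_eq_zero_iff]

end ZMod

namespace Polynomial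

variable {n k : ℕ} [NeZero n] (φ : ZMod (n ^ k) →+* ZMod n)

theorem exists_eq_C_pow_mul_map_ne_zero {f : (ZMod (n ^ k))[X]} (hf : f ≠ 0) :
    ∃ j < k, ∃ q, f = C ((n : ZMod (n ^ k)) ^ j) * q ∧ q.map φ ≠ 0 := by
  classical
  obtain ⟨j, hjP⟩ : ∃ j, Nat.findGreatest (fun j => C ((n : ZMod (n ^ k)) ^ j) ∣ f) k = j :=
    ⟨_, rfl⟩
  have hj : C ((n : ZMod (n ^ k)) ^ j) ∣ f := hjP ▸ Nat.findGreatest_spec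
    (P := fun j => C ((n : ZMod (n ^ k)) ^ j) ∣ f) (Nat.zero_le k) (by simp)
  have hjk : j < k := by
    refine (hjP ▸ Nat.findGreatest_le k).lt_of_ne fun hjk => hf ?_
    rwa [hjk, ← Nat.cast_pow, ZMod.natCast_self, C_0, zero_dvd_iff] at hj
  obtain ⟨q, hfq⟩ := hj
  refine ⟨j, hjk, q, hfq, fun hq => Nat.findGreatest_is_greatest
    (P := fun j => C ((n : ZMod (n ^ k)) ^ j) ∣ f) (by omega) hjk ?_⟩
  rw [hfq, pow_succ, C_mul]
  refine mul_dvd_mul_left _ ((C_dvd_iff_dvd_coeff _ _).mpr fun i => ?_)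
  exact ZMod.natCast_dvd_of_ringHom_eq_zero φ (by simpa using congrArg (coeff · i) hq)

theorem support_map_subset_support_C_pow_mul {j : ℕ} (hj : j < k) (q : (ZMod (n ^ k))[X]) :
    (q.map φ).support ⊆ (C ((n : ZMod (n ^ k)) ^ j) * q).support := by
  intro i hi
  rw [mem_support_iff, coeff_map] at hi
  rw [mem_support_iff, coeff_C_mul]
  exact mt (ZMod.ringHom_eq_zero_of_pow_mul_eq_zero φ hj) hi

end Polynomial

theorem stmt_2 (k N δ : ℕ) (hk : 1 ≤ k)
    (g h : Polynomial (ZMod (2 ^ k))) (hg : g.Monic)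
    (hfact : (X : Polynomial (ZMod (2 ^ k))) ^ N + 1 = g * h)
    (hbin : ∀ p : Polynomial (ZMod 2), p.degree < (N : WithBot ℕ) → p ≠ 0 →
      Ideal.Quotient.mk (Ideal.span {(X : Polynomial (ZMod 2)) ^ N + 1}) p ∈
        Ideal.span {Ideal.Quotient.mk (Ideal.span {(X : Polynomial (ZMod 2)) ^ N + 1})
          (g.map (ZMod.castHom (dvd_pow_self 2 (by omega : k ≠ 0)) (ZMod 2)))} →
      δ ≤ p.support.card) :
    ∀ p : Polynomial (ZMod (2 ^ k)), p.degree < (N : WithBot ℕ) → p ≠ 0 →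
      Ideal.Quotient.mk (Ideal.span {(X : Polynomial (ZMod (2 ^ k))) ^ N + 1}) p ∈
        Ideal.span {Ideal.Quotient.mk (Ideal.span {(X : Polynomial (ZMod (2 ^ k))) ^ N + 1}) g} →
      δ ≤ p.support.card := by
  intro p hdeg hp hmem
  set φ := ZMod.castHom (dvd_pow_self 2 (by omega : k ≠ 0)) (ZMod 2)
  have hgp : g ∣ p := Ideal.dvd_of_mk_mem_span_mk (Dvd.intro h hfact.symm) hmem
  obtain ⟨j, hjk, q, rfl, hq⟩ := exists_eq_C_pow_mul_map_ne_zero φ hp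
  have hsupp := support_map_subset_support_C_pow_mul φ hjk q
  have hdvd : g.map φ ∣ q.map φ :=
    hg.map_dvd_map_of_dvd_C_mul φ (fun _ => ZMod.ringHom_eq_zero_of_pow_mul_eq_zero φ hjk) hgp
  have hqdeg : (q.map φ).degree < N := (degree_mono hsupp).trans_lt hdeg
  calc δ ≤ (q.map φ).support.card :=
        hbin _ hqdeg hq (Ideal.mem_span_singleton.mpr (map_dvd _ hdvd))
    _ ≤ _ := Finset.card_le_card hsupp
end

section
/- Let k ≥ 1 and s ≥ 1 be integers, let f_1, …, f_s be monic pairwise coprime polynomials in (ZMod (2^k))[X] with M = ∏_{i=1}^s f_i, let M_i = ∏_{j ≠ i} f_j, let u_i satisfy M_i · u_i ≡ 1 (mod f_i), let e_i be the image of M_i · u_i in R := (ZMod (2^k))[X]/(M), and for a subset I ⊆ {1, …, s} set e = ∑_{i ∈ I} e_i. Then the map from the ideal Ideal.span {e} of R to the product ring ∏_{i ∈ I} (ZMod (2^k))[X]/(f_i), sending an element c to the tuple whose i-th component is the reduction modulo f_i of any polynomial representative of c, is well defined and bijective. -/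
/-!
Put `E = ∑_{i ∈ I} M_i u_i`. Since `f_j ∣ M_i` for `j ≠ i`, `E ≡ 1 (mod f_i)` for `i ∈ I` and
`E ≡ 0 (mod f_j)` for `j ∉ I`. Hence the class of `p` lies in `(e)` exactly when `f_j ∣ p` for all
`j ∉ I` (then `p E ≡ p` modulo every `f_j`, so modulo `M`). Reduction modulo `f_i` for `i ∈ I` is
therefore injective on `(e)`, since `M ∣ q` as soon as every `f_j ∣ q`, and surjective by the
Chinese remainder theorem applied with prescribed residues `0` at the `f_j`, `j ∉ I`.
-/

open Finset Function

section CRT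

variable {R ι : Type*} [CommRing R] [Fintype ι] {f : ι → R}

theorem exists_forall_dvd_sub (hf : Pairwise (IsCoprime on f)) (g : ι → R) :
    ∃ p, ∀ i, f i ∣ p - g i := by
  obtain ⟨p, hp⟩ := Ideal.exists_forall_sub_mem_ideal (I := fun i => Ideal.span {f i})
    (fun i j hij => (Ideal.isCoprime_span_singleton_iff _ _).mpr (hf hij)) g
  exact ⟨p, fun i => Ideal.mem_span_singleton.mp (hp i)⟩

theorem mk_prod_eq_iff (hf : Pairwise (IsCoprime on f)) (p q : R) :
    Ideal.Quotient.mk (Ideal.span {∏ i, f i}) p = Ideal.Quotient.mk _ q ↔ ∀ i, f i ∣ p - q := by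
  rw [Ideal.Quotient.eq, Ideal.mem_span_singleton]
  exact ⟨fun h i => (dvd_prod_of_mem f (mem_univ i)).trans h, Fintype.prod_dvd_of_coprime hf⟩

variable (f) in
def reduceModFactor (i : ι) : R ⧸ Ideal.span {∏ j, f j} →+* R ⧸ Ideal.span {f i} :=
  Ideal.Quotient.factor
    (Ideal.span_singleton_le_span_singleton.mpr (dvd_prod_of_mem f (mem_univ i)))

theorem reduceModFactor_mk (i : ι) (p : R) :
    reduceModFactor f i (Ideal.Quotient.mk _ p) = Ideal.Quotient.mk _ p :=
  Ideal.Quotient.factor_mk _ p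

section Idempotent

variable {I : Finset ι} {E : R} (hE₁ : ∀ i ∈ I, f i ∣ E - 1) (hE₀ : ∀ i ∉ I, f i ∣ E)
include hE₁ hE₀

theorem mk_mem_span_singleton_iff (hf : Pairwise (IsCoprime on f)) (p : R) :
    Ideal.Quotient.mk (Ideal.span {∏ i, f i}) p ∈ Ideal.span {Ideal.Quotient.mk _ E} ↔
      ∀ i ∉ I, f i ∣ p := by
  rw [Ideal.mem_span_singleton']
  constructor
  · rintro ⟨a, ha⟩ i hi
    obtain ⟨q, rfl⟩ := Ideal.Quotient.mk_surjective a
    rw [← map_mul, mk_prod_eq_iff hf] at ha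
    simpa using dvd_sub ((hE₀ i hi).mul_left q) (ha i)
  · intro hp
    refine ⟨Ideal.Quotient.mk _ p, ?_⟩
    rw [← map_mul, mk_prod_eq_iff hf]
    intro i
    by_cases hi : i ∈ I
    · simpa [mul_sub] using (hE₁ i hi).mul_left p
    · exact dvd_sub ((hp i hi).mul_right E) (hp i hi)

theorem bijective_reduceModFactor_span_singleton (hf : Pairwise (IsCoprime on f)) :
    Bijective fun (x : Ideal.span {Ideal.Quotient.mk (Ideal.span {∏ i, f i}) E})
      (i : I) => reduceModFactor f i x.1 := by
  have hmem := mk_mem_span_singleton_iff hE₁ hE₀ hf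
  constructor
  · rintro ⟨x, hx⟩ ⟨y, hy⟩ hxy
    obtain ⟨p, rfl⟩ := Ideal.Quotient.mk_surjective x
    obtain ⟨q, rfl⟩ := Ideal.Quotient.mk_surjective y
    refine Subtype.ext ((mk_prod_eq_iff hf p q).mpr fun i => ?_)
    by_cases hi : i ∈ I
    · have h := congrFun hxy ⟨i, hi⟩
      simp only [reduceModFactor_mk] at h
      exact Ideal.mem_span_singleton.mp (Ideal.Quotient.eq.mp h)
    · exact dvd_sub ((hmem p).mp hx i hi) ((hmem q).mp hy i hi)
  · intro c
    choose g hg using fun i => Ideal.Quotient.mk_surjective (c i)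
    classical
    obtain ⟨p, hp⟩ := exists_forall_dvd_sub hf fun i => if h : i ∈ I then g ⟨i, h⟩ else 0
    refine ⟨⟨_, (hmem p).mpr fun i hi => by simpa [hi] using hp i⟩, funext fun i => ?_⟩
    change reduceModFactor f i (Ideal.Quotient.mk _ p) = c i
    rw [reduceModFactor_mk, ← hg i, Ideal.Quotient.eq, Ideal.mem_span_singleton]
    simpa using hp i

end Idempotent

variable [DecidableEq ι]

variable (f) in
def crtIdempotent (u : ι → R) (I : Finset ι) : R :=
  ∑ i ∈ I, (∏ j ∈ univ.erase i, f j) * u i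

theorem dvd_prod_erase {i j : ι} (hij : j ≠ i) : f j ∣ ∏ l ∈ univ.erase i, f l :=
  dvd_prod_of_mem f (mem_erase.mpr ⟨hij, mem_univ j⟩)

theorem dvd_crtIdempotent (u : ι → R) {I : Finset ι} {j : ι} (hj : j ∉ I) :
    f j ∣ crtIdempotent f u I :=
  dvd_sum fun _ hi => (dvd_prod_erase (ne_of_mem_of_not_mem hi hj).symm).mul_right _

theorem dvd_crtIdempotent_sub_one {u : ι → R}
    (hu : ∀ i, f i ∣ (∏ j ∈ univ.erase i, f j) * u i - 1) {I : Finset ι} {j : ι} (hj : j ∈ I) :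
    f j ∣ crtIdempotent f u I - 1 := by
  rw [crtIdempotent, ← sum_erase_add I _ hj, add_sub_assoc]
  exact dvd_add (dvd_crtIdempotent u (I.notMem_erase j)) (hu j)

end CRT

theorem stmt_5_general (k s : ℕ)
    (f : Fin s → Polynomial (ZMod (2 ^ k)))
    (hcop : ∀ i j, i ≠ j → IsCoprime (f i) (f j))
    (u : Fin s → Polynomial (ZMod (2 ^ k)))
    (hu : ∀ i, f i ∣ ((∏ j ∈ Finset.univ.erase i, f j) * u i - 1))
    (I : Finset (Fin s))
    (e : Polynomial (ZMod (2 ^ k)) ⧸ Ideal.span {∏ i, f i})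
    (he : e = ∑ i ∈ I, Ideal.Quotient.mk (Ideal.span {∏ i, f i})
      ((∏ j ∈ Finset.univ.erase i, f j) * u i)) :
    ∃ φ : ↥(Ideal.span {e}) →
        (∀ i : {i : Fin s // i ∈ I}, Polynomial (ZMod (2 ^ k)) ⧸ Ideal.span {f i.1}),
      (∀ (p : Polynomial (ZMod (2 ^ k)))
        (hp : Ideal.Quotient.mk (Ideal.span {∏ i, f i}) p ∈ Ideal.span {e})
        (i : {i : Fin s // i ∈ I}),
        φ ⟨Ideal.Quotient.mk (Ideal.span {∏ i, f i}) p, hp⟩ i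
          = Ideal.Quotient.mk (Ideal.span {f i.1}) p) ∧
      Function.Bijective φ := by
  obtain rfl : e = Ideal.Quotient.mk _ (crtIdempotent f u I) := by
    rw [he, crtIdempotent, map_sum]
  exact ⟨fun x i => reduceModFactor f i x.1, fun p _ i => reduceModFactor_mk (f := f) i.1 p,
    bijective_reduceModFactor_span_singleton
      (fun _ => dvd_crtIdempotent_sub_one hu) (fun _ => dvd_crtIdempotent u) hcop⟩

theorem stmt_5 (k s : ℕ) (hk : 1 ≤ k) (hs : 1 ≤ s)
    (f : Fin s → Polynomial (ZMod (2 ^ k)))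
    (hf : ∀ i, (f i).Monic)
    (hcop : ∀ i j, i ≠ j → IsCoprime (f i) (f j))
    (u : Fin s → Polynomial (ZMod (2 ^ k)))
    (hu : ∀ i, f i ∣ ((∏ j ∈ Finset.univ.erase i, f j) * u i - 1))
    (I : Finset (Fin s))
    (e : Polynomial (ZMod (2 ^ k)) ⧸ Ideal.span {∏ i, f i})
    (he : e = ∑ i ∈ I, Ideal.Quotient.mk (Ideal.span {∏ i, f i})
      ((∏ j ∈ Finset.univ.erase i, f j) * u i)) :
    ∃ φ : ↥(Ideal.span {e}) →
        (∀ i : {i : Fin s // i ∈ I}, Polynomial (ZMod (2 ^ k)) ⧸ Ideal.span {f i.1}),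
      (∀ (p : Polynomial (ZMod (2 ^ k)))
        (hp : Ideal.Quotient.mk (Ideal.span {∏ i, f i}) p ∈ Ideal.span {e})
        (i : {i : Fin s // i ∈ I}),
        φ ⟨Ideal.Quotient.mk (Ideal.span {∏ i, f i}) p, hp⟩ i
          = Ideal.Quotient.mk (Ideal.span {f i.1}) p) ∧
      Function.Bijective φ :=
  stmt_5_general k s f hcop u hu I e he
end

section
/- Let k ≥ 1 and m ≥ 1 be integers. Every element e of the quotient ring (ZMod (2^k))[X]/(X^{2^m} + 1) satisfying e² = e equals 0 or 1. In particular, this ring has no nontrivial idempotents. -/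
/-!
Both `2` and `X + 1` are nilpotent in the quotient: `2 ^ k = 0`, and
`(X + 1) ^ (2 ^ m) ≡ X ^ (2 ^ m) + 1 = 0` modulo `2`. Writing `f = f(-1) + (X + 1) q`, every
element is an element of `ZMod (2 ^ k)` plus a nilpotent, hence a unit or nilpotent (as elements
of `ZMod (2 ^ k)` are). An idempotent that is a unit is `1`, one that is nilpotent is `0`.
-/

open Polynomial

theorem ZMod.isUnit_or_isNilpotent_of_prime_pow {p : ℕ} (hp : p.Prime) (k : ℕ)
    (a : ZMod (p ^ k)) : IsUnit a ∨ IsNilpotent a := by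
  have : NeZero (p ^ k) := ⟨pow_ne_zero k hp.ne_zero⟩
  obtain ⟨n, rfl⟩ := ZMod.natCast_zmod_surjective a
  by_cases hpn : p ∣ n
  · obtain ⟨t, rfl⟩ := hpn
    refine Or.inr ⟨k, ?_⟩
    rw [Nat.cast_mul, mul_pow, ← Nat.cast_pow, ZMod.natCast_self, zero_mul]
  · exact Or.inl <| (ZMod.isUnit_iff_coprime n _).mpr <|
      Nat.Coprime.pow_right k (Nat.coprime_comm.mp (hp.coprime_iff_not_dvd.mpr hpn))

theorem IsIdempotentElem.eq_zero_or_one_of_isUnit_or_isNilpotent {R : Type*}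
    [MonoidWithZero R] {e : R} (he : IsIdempotentElem e) (h : IsUnit e ∨ IsNilpotent e) :
    e = 0 ∨ e = 1 :=
  h.symm.imp he.eq_zero_of_isNilpotent fun hu ↦ (IsIdempotentElem.iff_eq_one_of_isUnit hu).mp he

theorem isUnit_or_isNilpotent_of_forall_exists_isNilpotent_sub {A R : Type*} [CommRing A]
    [CommRing R] [Algebra A R] (hA : ∀ a : A, IsUnit a ∨ IsNilpotent a)
    (hR : ∀ r : R, ∃ a : A, IsNilpotent (r - algebraMap A R a)) (r : R) :
    IsUnit r ∨ IsNilpotent r := by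
  obtain ⟨a, ha⟩ := hR r
  rw [← add_sub_cancel (algebraMap A R a) r]
  exact (hA a).imp (fun hu ↦ ha.isUnit_add_left_of_commute (hu.map _) (Commute.all _ _))
    fun hn ↦ (Commute.all _ _).isNilpotent_add (hn.map _) ha

theorem isNilpotent_add_one_of_pow_two_pow_eq_neg_one {R : Type*} [CommRing R]
    (h2 : IsNilpotent (2 : R)) {x : R} {n : ℕ} (hx : x ^ 2 ^ n = -1) : IsNilpotent (x + 1) := by
  obtain ⟨r, hr⟩ := exists_add_pow_prime_pow_eq Nat.prime_two x 1 n
  refine IsNilpotent.of_pow (m := 2 ^ n) ?_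
  rw [hr, hx, one_pow, neg_add_cancel, zero_add, Nat.cast_ofNat, mul_assoc, mul_assoc]
  exact (Commute.all _ _).isNilpotent_mul_right h2

theorem exists_isNilpotent_sub_algebraMap_quotient_X_pow_two_pow_add_one {A : Type*} [CommRing A]
    (h2 : IsNilpotent (2 : A)) (n : ℕ)
    (r : A[X] ⧸ Ideal.span {(X : A[X]) ^ 2 ^ n + 1}) :
    ∃ a : A, IsNilpotent (r - algebraMap A _ a) := by
  obtain ⟨f, rfl⟩ := Ideal.Quotient.mk_surjective r
  set I := Ideal.span {(X : A[X]) ^ 2 ^ n + 1}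
  have hX : Ideal.Quotient.mk I X ^ 2 ^ n = -1 := by
    rw [← map_pow, eq_neg_iff_add_eq_zero, ← map_one (Ideal.Quotient.mk I), ← map_add,
      Ideal.Quotient.eq_zero_iff_mem]
    exact Ideal.subset_span rfl
  have hX1 : IsNilpotent (Ideal.Quotient.mk I X + 1) :=
    isNilpotent_add_one_of_pow_two_pow_eq_neg_one
      (by rw [← map_ofNat (algebraMap A (A[X] ⧸ I)) 2]; exact h2.map _) hX
  obtain ⟨q, hq⟩ := X_sub_C_dvd_sub_C_eval (a := -1) (p := f)
  refine ⟨f.eval (-1), ?_⟩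
  rw [← Ideal.Quotient.mk_algebraMap, algebraMap_eq, ← map_sub, hq, C_neg, C_1, sub_neg_eq_add,
    map_mul, map_add, map_one]
  exact (Commute.all _ _).isNilpotent_mul_right hX1

theorem stmt_6_general (k m : ℕ)
    (e : Polynomial (ZMod (2 ^ k)) ⧸ Ideal.span {(X : Polynomial (ZMod (2 ^ k))) ^ (2 ^ m) + 1})
    (he : e ^ 2 = e) : e = 0 ∨ e = 1 := by
  have h2 : IsNilpotent (2 : ZMod (2 ^ k)) := ⟨k, by exact_mod_cast ZMod.natCast_self (2 ^ k)⟩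
  have hidem : IsIdempotentElem e := by rw [IsIdempotentElem, ← sq, he]
  exact hidem.eq_zero_or_one_of_isUnit_or_isNilpotent <|
    isUnit_or_isNilpotent_of_forall_exists_isNilpotent_sub
      (ZMod.isUnit_or_isNilpotent_of_prime_pow Nat.prime_two k)
      (exists_isNilpotent_sub_algebraMap_quotient_X_pow_two_pow_add_one h2 m) e

theorem stmt_6 (k m : ℕ) (hk : 1 ≤ k) (hm : 1 ≤ m)
    (e : Polynomial (ZMod (2 ^ k)) ⧸ Ideal.span {(X : Polynomial (ZMod (2 ^ k))) ^ (2 ^ m) + 1})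
    (he : e ^ 2 = e) : e = 0 ∨ e = 1 :=
  stmt_6_general k m e he
end

section
/- Let k ≥ 1 and m ≥ 1 be integers, let R = (ZMod (2^k))[X]/(X^{2^m} + 1), and let x denote the image of X in R. Then R is a local ring, its unique maximal ideal is Ideal.span {2, x + 1} (the ideal generated by the elements 2 and x + 1 of R), and the quotient ring R / Ideal.span {2, x + 1} is isomorphic as a ring to ZMod 2. -/
/-!
Both generators of `M = (2, x + 1)` are nilpotent in `R`: `2 ^ k = 0`, and
`(x + 1) ^ 2 ^ m ≡ x ^ 2 ^ m + 1 = 0` modulo `2`. Hence `M` lies in every prime ideal of `R`.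
On the other hand `R / M ≅ (ZMod (2 ^ k))[X] / (2, X + 1) ≅ ZMod (2 ^ k) / (2) ≅ ZMod 2` is a
field, so `M` is maximal, and therefore the only maximal ideal. The same argument applies to
`A[X] / (f)` whenever `π ∈ A` is nilpotent, `A / (π)` is a field and `f ≡ (X - a) ^ n` mod `π`.
-/

open Polynomial

theorem Ideal.IsMaximal.eq_of_le_nilradical {R : Type*} [CommRing R] {M J : Ideal R}
    (hM : M.IsMaximal) (hMnil : M ≤ nilradical R) (hJ : J.IsMaximal) : J = M :=
  (hM.eq_of_le hJ.ne_top (hMnil.trans (nilradical_le_prime J))).symm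

theorem IsLocalRing.of_isMaximal_le_nilradical {R : Type*} [CommRing R] {M : Ideal R}
    (hM : M.IsMaximal) (hMnil : M ≤ nilradical R) : IsLocalRing R :=
  .of_unique_max_ideal ⟨M, hM, fun _ hJ ↦ hM.eq_of_le_nilradical hMnil hJ⟩

namespace ZMod

theorem ker_castHom {d n : ℕ} (h : d ∣ n) :
    RingHom.ker (castHom h (ZMod d)) = Ideal.span {(d : ZMod n)} := by
  ext a
  obtain ⟨z, rfl⟩ := intCast_surjective a
  rw [RingHom.mem_ker, map_intCast, intCast_zmod_eq_zero_iff_dvd, Ideal.mem_span_singleton]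
  constructor
  · rintro ⟨c, rfl⟩
    exact ⟨c, by push_cast; rfl⟩
  · rintro ⟨c, hc⟩
    have hcast := congrArg (castHom h (ZMod d)) hc
    rw [map_intCast, map_mul, map_natCast, natCast_self, zero_mul,
      intCast_zmod_eq_zero_iff_dvd] at hcast
    exact hcast

noncomputable def quotientSpanNatCastEquiv {d n : ℕ} (h : d ∣ n) :
    ZMod n ⧸ Ideal.span {(d : ZMod n)} ≃+* ZMod d :=
  (Ideal.quotEquivOfEq (ker_castHom h).symm).trans
    (RingHom.quotientKerEquivOfSurjective (castHom_surjective h))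

theorem isMaximal_span_natCast {p n : ℕ} [Fact p.Prime] (h : p ∣ n) :
    (Ideal.span {(p : ZMod n)}).IsMaximal :=
  Ideal.Quotient.maximal_of_isField _ <|
    (quotientSpanNatCastEquiv h).toMulEquiv.isField (Field.toIsField (ZMod p))

theorem isNilpotent_natCast_of_dvd_pow {p n k : ℕ} (h : n ∣ p ^ k) : IsNilpotent (p : ZMod n) :=
  ⟨k, by rw [← Nat.cast_pow, natCast_eq_zero_iff]; exact h⟩

end ZMod

namespace Polynomial

variable {A : Type*} [CommRing A] {π a : A} {f : A[X]} {n : ℕ}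

theorem map_span_C_X_sub_C_le_nilradical (hπ : IsNilpotent π) (hf : C π ∣ f - (X - C a) ^ n) :
    (Ideal.span {C π, X - C a}).map (Ideal.Quotient.mk (Ideal.span {f})) ≤ nilradical _ := by
  set mk := Ideal.Quotient.mk (Ideal.span {f})
  have hπR : mk (C π) ∈ nilradical _ := mem_nilradical.mpr ((hπ.map C).map mk)
  obtain ⟨q, hq⟩ := hf
  have hpow : mk (X - C a) ^ n = -(mk (C π) * mk q) := by
    rw [← map_pow, ← map_mul, ← hq, map_sub,
      Ideal.Quotient.eq_zero_iff_mem.mpr (Ideal.mem_span_singleton_self f), zero_sub, neg_neg]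
  have hXR : mk (X - C a) ∈ nilradical _ := by
    refine mem_nilradical.mpr (IsNilpotent.of_pow (m := n) (mem_nilradical.mp ?_))
    rw [hpow]
    exact neg_mem (Ideal.mul_mem_right _ _ hπR)
  rw [Ideal.map_span, Set.image_pair, Ideal.span_le, Set.pair_subset_iff]
  exact ⟨hπR, hXR⟩

theorem mem_span_C_X_sub_C_of_dvd_sub_pow (hn : n ≠ 0) (hf : C π ∣ f - (X - C a) ^ n) :
    f ∈ Ideal.span {C π, X - C a} := by
  obtain ⟨q, hq⟩ := hf
  refine Ideal.mem_span_pair.mpr ⟨q, (X - C a) ^ (n - 1), ?_⟩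
  rw [← pow_succ, Nat.sub_add_cancel (Nat.one_le_iff_ne_zero.mpr hn), mul_comm, ← hq]
  ring

noncomputable def quotientMapSpanCXSubCEquiv (hn : n ≠ 0) (hf : C π ∣ f - (X - C a) ^ n) :
    (A[X] ⧸ Ideal.span {f}) ⧸ (Ideal.span {C π, X - C a}).map (Ideal.Quotient.mk _) ≃+*
      A ⧸ Ideal.span {π} :=
  (DoubleQuot.quotQuotEquivQuotSup _ _).trans <|
    (Ideal.quotEquivOfEq (sup_eq_right.mpr ((Ideal.span_singleton_le_iff_mem _).mpr
      (mem_span_C_X_sub_C_of_dvd_sub_pow hn hf)))).trans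
    (quotientSpanCXSubCAlgEquiv π a).toRingEquiv

theorem isMaximal_map_span_C_X_sub_C (hπ : (Ideal.span {π}).IsMaximal) (hn : n ≠ 0)
    (hf : C π ∣ f - (X - C a) ^ n) :
    ((Ideal.span {C π, X - C a}).map (Ideal.Quotient.mk (Ideal.span {f}))).IsMaximal :=
  Ideal.Quotient.maximal_of_isField _ <| (quotientMapSpanCXSubCEquiv hn hf).toMulEquiv.isField
    ((Ideal.Quotient.maximal_ideal_iff_isField_quotient _).mp hπ)

end Polynomial

theorem stmt_7_general (k m : ℕ) (hk : 1 ≤ k)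
    (x : Polynomial (ZMod (2 ^ k)) ⧸ Ideal.span {(X : Polynomial (ZMod (2 ^ k))) ^ (2 ^ m) + 1})
    (hx : x = Ideal.Quotient.mk
      (Ideal.span {(X : Polynomial (ZMod (2 ^ k))) ^ (2 ^ m) + 1}) X) :
    IsLocalRing
        (Polynomial (ZMod (2 ^ k)) ⧸ Ideal.span {(X : Polynomial (ZMod (2 ^ k))) ^ (2 ^ m) + 1}) ∧
    (Ideal.span {(2 : Polynomial (ZMod (2 ^ k)) ⧸
        Ideal.span {(X : Polynomial (ZMod (2 ^ k))) ^ (2 ^ m) + 1}), x + 1}).IsMaximal ∧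
    (∀ J : Ideal (Polynomial (ZMod (2 ^ k)) ⧸
        Ideal.span {(X : Polynomial (ZMod (2 ^ k))) ^ (2 ^ m) + 1}),
      J.IsMaximal → J = Ideal.span {(2 : Polynomial (ZMod (2 ^ k)) ⧸
        Ideal.span {(X : Polynomial (ZMod (2 ^ k))) ^ (2 ^ m) + 1}), x + 1}) ∧
    Nonempty (((Polynomial (ZMod (2 ^ k)) ⧸
        Ideal.span {(X : Polynomial (ZMod (2 ^ k))) ^ (2 ^ m) + 1}) ⧸
      Ideal.span {(2 : Polynomial (ZMod (2 ^ k)) ⧸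
        Ideal.span {(X : Polynomial (ZMod (2 ^ k))) ^ (2 ^ m) + 1}), x + 1}) ≃+* ZMod 2) := by
  have hM : Ideal.span {2, x + 1} = (Ideal.span {C ((2 : ℕ) : ZMod (2 ^ k)), X - C (-1)}).map
      (Ideal.Quotient.mk (Ideal.span {(X : Polynomial (ZMod (2 ^ k))) ^ (2 ^ m) + 1})) := by
    rw [hx, C_neg, C_1, sub_neg_eq_add, Ideal.map_span, Set.image_pair, map_natCast, map_natCast,
      Nat.cast_ofNat, map_add, map_one]
  have hf : C ((2 : ℕ) : ZMod (2 ^ k)) ∣ (X ^ 2 ^ m + 1) - (X - C (-1)) ^ 2 ^ m := by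
    obtain ⟨r, hr⟩ := (Commute.all (X : (ZMod (2 ^ k))[X]) 1).exists_add_pow_prime_pow_eq
      Nat.prime_two m
    exact ⟨-(X * r), by rw [C_neg, C_1, sub_neg_eq_add, hr, map_natCast]; ring⟩
  have h2 : 2 ∣ 2 ^ k := dvd_pow_self 2 (by omega)
  have hn : 2 ^ m ≠ 0 := pow_ne_zero m two_ne_zero
  have hmax := ZMod.isMaximal_span_natCast h2
  have hnil := ZMod.isNilpotent_natCast_of_dvd_pow (dvd_refl (2 ^ k))
  have hMmax := isMaximal_map_span_C_X_sub_C hmax hn hf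
  have hMnil := map_span_C_X_sub_C_le_nilradical hnil hf
  rw [hM]
  exact ⟨.of_isMaximal_le_nilradical hMmax hMnil, hMmax,
    fun _ hJ ↦ hMmax.eq_of_le_nilradical hMnil hJ,
    ⟨(quotientMapSpanCXSubCEquiv hn hf).trans (ZMod.quotientSpanNatCastEquiv h2)⟩⟩

theorem stmt_7 (k m : ℕ) (hk : 1 ≤ k) (hm : 1 ≤ m)
    (x : Polynomial (ZMod (2 ^ k)) ⧸ Ideal.span {(X : Polynomial (ZMod (2 ^ k))) ^ (2 ^ m) + 1})
    (hx : x = Ideal.Quotient.mk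
      (Ideal.span {(X : Polynomial (ZMod (2 ^ k))) ^ (2 ^ m) + 1}) X) :
    IsLocalRing
        (Polynomial (ZMod (2 ^ k)) ⧸ Ideal.span {(X : Polynomial (ZMod (2 ^ k))) ^ (2 ^ m) + 1}) ∧
    (Ideal.span {(2 : Polynomial (ZMod (2 ^ k)) ⧸
        Ideal.span {(X : Polynomial (ZMod (2 ^ k))) ^ (2 ^ m) + 1}), x + 1}).IsMaximal ∧
    (∀ J : Ideal (Polynomial (ZMod (2 ^ k)) ⧸
        Ideal.span {(X : Polynomial (ZMod (2 ^ k))) ^ (2 ^ m) + 1}),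
      J.IsMaximal → J = Ideal.span {(2 : Polynomial (ZMod (2 ^ k)) ⧸
        Ideal.span {(X : Polynomial (ZMod (2 ^ k))) ^ (2 ^ m) + 1}), x + 1}) ∧
    Nonempty (((Polynomial (ZMod (2 ^ k)) ⧸
        Ideal.span {(X : Polynomial (ZMod (2 ^ k))) ^ (2 ^ m) + 1}) ⧸
      Ideal.span {(2 : Polynomial (ZMod (2 ^ k)) ⧸
        Ideal.span {(X : Polynomial (ZMod (2 ^ k))) ^ (2 ^ m) + 1}), x + 1}) ≃+* ZMod 2) :=
  stmt_7_general k m hk x hx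
end

section
/- Let A be a commutative ring, let f ∈ A[X], and let r ≥ 0 be an integer. Then (X + 1)^r divides f in A[X] if and only if (Polynomial.hasseDeriv i f).eval (−1) = 0 for every i with 0 ≤ i < r. -/
open Polynomial

namespace Polynomial

variable {R : Type*} [CommRing R]

theorem X_sub_C_pow_dvd_iff_X_pow_dvd_taylor (a : R) (n : ℕ) (f : R[X]) :
    (X - C a) ^ n ∣ f ↔ X ^ n ∣ taylor a f := by
  rw [← map_dvd_iff (taylorEquiv a)]
  change taylor a ((X - C a) ^ n) ∣ taylor a f ↔ _
  rw [taylor_pow, map_sub, taylor_X, taylor_C, add_sub_cancel_right]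

theorem X_sub_C_pow_dvd_iff_hasseDeriv_eval_eq_zero (a : R) (n : ℕ) (f : R[X]) :
    (X - C a) ^ n ∣ f ↔ ∀ i < n, (hasseDeriv i f).eval a = 0 := by
  simp only [X_sub_C_pow_dvd_iff_X_pow_dvd_taylor, X_pow_dvd_iff, taylor_coeff]

end Polynomial

theorem stmt_12 {A : Type*} [CommRing A] (f : Polynomial A) (r : ℕ) :
    (X + 1) ^ r ∣ f ↔ ∀ i < r, (Polynomial.hasseDeriv i f).eval (-1) = 0 := by
  simpa using X_sub_C_pow_dvd_iff_hasseDeriv_eval_eq_zero (-1 : A) r f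
end

section
/- Let k ≥ 1 and N ≥ 1 be integers and let a be a natural number with gcd(a, 2N) = 1. Let R = (ZMod (2^k))[X]/(X^N + 1) and let x denote the image of X in R. Then there exists a ZMod (2^k)-algebra automorphism σ_a of R with σ_a(x) = x^a. Moreover, if b is a natural number with a · b ≡ 1 (mod 2N), then σ_b ∘ σ_a is the identity map on R. -/
/-!
In `R[X]/(X^N + 1)` the root `x` satisfies `x^N = -1`, so for odd `c` the element `x^c` is again
a root of `X^N + 1` and `x ↦ x^c` defines an algebra endomorphism. Since `x^(2N) = 1`, any two
endomorphisms with `x ↦ x^a` and `x ↦ x^b`, where `a * b ≡ 1 (mod 2N)`, compose to the identity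
on the generator `x`, hence everywhere. Both `a` and `b` are then odd, so this also produces the
inverse of `x ↦ x^a`. The ring is handled as `AdjoinRoot (X^N + 1)`, which is definitionally
the quotient `R[X] ⧸ span {X^N + 1}`.
-/

open Polynomial

theorem pow_eq_self_of_modEq_one {M : Type*} [Monoid M] {x : M} {m n : ℕ} (hx : x ^ m = 1)
    (hn : n ≡ 1 [MOD m]) : x ^ n = x := by
  rw [pow_eq_pow_mod n hx, hn, ← pow_eq_pow_mod 1 hx, pow_one]

theorem Nat.odd_and_odd_of_mul_modEq_one {a b N : ℕ} (hab : a * b ≡ 1 [MOD 2 * N]) :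
    Odd a ∧ Odd b :=
  Nat.odd_mul.mp (Nat.odd_iff.mpr (hab.of_mul_right N))

namespace AdjoinRoot

variable {R : Type*} [CommRing R] {N : ℕ}

theorem root_X_pow_add_one_pow : root ((X : R[X]) ^ N + 1) ^ N = -1 := by
  have h := isRoot_root ((X : R[X]) ^ N + 1)
  simp only [Polynomial.map_add, Polynomial.map_pow, map_X, Polynomial.map_one, IsRoot.def,
    eval_add, eval_pow, eval_X, eval_one] at h
  exact eq_neg_of_add_eq_zero_left h

theorem root_X_pow_add_one_pow_two_mul : root ((X : R[X]) ^ N + 1) ^ (2 * N) = 1 := by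
  rw [pow_mul', root_X_pow_add_one_pow, neg_one_sq]

noncomputable def powAlgHom (c : ℕ) (hc : Odd c) :
    AdjoinRoot ((X : R[X]) ^ N + 1) →ₐ[R] AdjoinRoot ((X : R[X]) ^ N + 1) :=
  liftAlgHom _ (Algebra.ofId R _) (root _ ^ c) <| by
    rw [eval₂_add, eval₂_X_pow, eval₂_one, ← pow_mul, mul_comm, pow_mul,
      root_X_pow_add_one_pow, hc.neg_one_pow, neg_add_cancel]

@[simp]
theorem powAlgHom_root (c : ℕ) (hc : Odd c) :
    powAlgHom (R := R) (N := N) c hc (root _) = root _ ^ c :=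
  liftAlgHom_root _ _ _ _

theorem algHom_comp_eq_id_of_mul_modEq {a b : ℕ} (hab : a * b ≡ 1 [MOD 2 * N])
    {f g : AdjoinRoot ((X : R[X]) ^ N + 1) →ₐ[R] AdjoinRoot ((X : R[X]) ^ N + 1)}
    (hf : f (root _) = root _ ^ a) (hg : g (root _) = root _ ^ b) :
    g.comp f = AlgHom.id R _ := by
  refine algHom_ext ?_
  rw [AlgHom.comp_apply, hf, map_pow, hg, ← pow_mul, AlgHom.id_apply,
    pow_eq_self_of_modEq_one root_X_pow_add_one_pow_two_mul (mul_comm b a ▸ hab)]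

noncomputable def powAlgEquiv {a b : ℕ} (hab : a * b ≡ 1 [MOD 2 * N]) :
    AdjoinRoot ((X : R[X]) ^ N + 1) ≃ₐ[R] AdjoinRoot ((X : R[X]) ^ N + 1) :=
  have hodd := Nat.odd_and_odd_of_mul_modEq_one hab
  AlgEquiv.ofAlgHom (powAlgHom a hodd.1) (powAlgHom b hodd.2)
    (algHom_comp_eq_id_of_mul_modEq (mul_comm a b ▸ hab) (powAlgHom_root _ _) (powAlgHom_root _ _))
    (algHom_comp_eq_id_of_mul_modEq hab (powAlgHom_root _ _) (powAlgHom_root _ _))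

@[simp]
theorem powAlgEquiv_root {a b : ℕ} (hab : a * b ≡ 1 [MOD 2 * N]) :
    powAlgEquiv (R := R) hab (root _) = root _ ^ a :=
  powAlgHom_root a (Nat.odd_and_odd_of_mul_modEq_one hab).1

end AdjoinRoot

open AdjoinRoot in
theorem stmt_14_general (k N : ℕ) (hN : 1 ≤ N) (a : ℕ) (ha : Nat.gcd a (2 * N) = 1)
    (x : Polynomial (ZMod (2 ^ k)) ⧸ Ideal.span {(X : Polynomial (ZMod (2 ^ k))) ^ N + 1})
    (hx : x = Ideal.Quotient.mk
      (Ideal.span {(X : Polynomial (ZMod (2 ^ k))) ^ N + 1}) X) :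
    (∃ σa : (Polynomial (ZMod (2 ^ k)) ⧸ Ideal.span {(X : Polynomial (ZMod (2 ^ k))) ^ N + 1})
        ≃ₐ[ZMod (2 ^ k)]
        (Polynomial (ZMod (2 ^ k)) ⧸ Ideal.span {(X : Polynomial (ZMod (2 ^ k))) ^ N + 1}),
      σa x = x ^ a) ∧
    (∀ b : ℕ, a * b ≡ 1 [MOD 2 * N] →
      ∀ σa σb : (Polynomial (ZMod (2 ^ k)) ⧸ Ideal.span {(X : Polynomial (ZMod (2 ^ k))) ^ N + 1})
          ≃ₐ[ZMod (2 ^ k)]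
          (Polynomial (ZMod (2 ^ k)) ⧸ Ideal.span {(X : Polynomial (ZMod (2 ^ k))) ^ N + 1}),
        σa x = x ^ a → σb x = x ^ b →
        ∀ y, σb (σa y) = y) := by
  subst hx
  obtain ⟨b, -, hab⟩ := Nat.exists_mul_mod_eq_one_of_coprime ha (by omega)
  have hab : a * b ≡ 1 [MOD 2 * N] := hab.trans (Nat.mod_eq_of_lt (by omega)).symm
  refine ⟨⟨powAlgEquiv hab, powAlgEquiv_root hab⟩, fun b hab σa σb hσa hσb y => ?_⟩
  exact AlgHom.congr_fun
    (algHom_comp_eq_id_of_mul_modEq hab (f := σa.toAlgHom) (g := σb.toAlgHom) hσa hσb) y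

theorem stmt_14 (k N : ℕ) (hk : 1 ≤ k) (hN : 1 ≤ N) (a : ℕ) (ha : Nat.gcd a (2 * N) = 1)
    (x : Polynomial (ZMod (2 ^ k)) ⧸ Ideal.span {(X : Polynomial (ZMod (2 ^ k))) ^ N + 1})
    (hx : x = Ideal.Quotient.mk
      (Ideal.span {(X : Polynomial (ZMod (2 ^ k))) ^ N + 1}) X) :
    (∃ σa : (Polynomial (ZMod (2 ^ k)) ⧸ Ideal.span {(X : Polynomial (ZMod (2 ^ k))) ^ N + 1})
        ≃ₐ[ZMod (2 ^ k)]
        (Polynomial (ZMod (2 ^ k)) ⧸ Ideal.span {(X : Polynomial (ZMod (2 ^ k))) ^ N + 1}),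
      σa x = x ^ a) ∧
    (∀ b : ℕ, a * b ≡ 1 [MOD 2 * N] →
      ∀ σa σb : (Polynomial (ZMod (2 ^ k)) ⧸ Ideal.span {(X : Polynomial (ZMod (2 ^ k))) ^ N + 1})
          ≃ₐ[ZMod (2 ^ k)]
          (Polynomial (ZMod (2 ^ k)) ⧸ Ideal.span {(X : Polynomial (ZMod (2 ^ k))) ^ N + 1}),
        σa x = x ^ a → σb x = x ^ b →
        ∀ y, σb (σa y) = y) :=
  stmt_14_general k N hN a ha x hx
end
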